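/- arXiv:2308.16365 — 3 statements merged into one kernel-verified Lean document; each statement's English description precedes it below -/
import Mathlib

section
/- Let n ≥ 5 and let c be a (5,8)-coloring of K_n with no monochromatic triangle. If X is a maximal monochromatic component isomorphic to P_4 (path with 3 edges) or K_{1,3} (star with 3 edges), then each of the three vertex pairs in L(X) is an edge of K_n that forms by itself a maximal monochromatic component isomorphic to K_2, and these three edges receive three pairwise distinct colors. -/
open SimpleGraph

/-- The color class of color `i` in the edge-coloring `c` of the complete graph on `Fin n`:
the spanning subgraph consisting of the edges of color `i`. -/
def colorClass {n : ℕ} {α : Type*} (c : Sym2 (Fin n) → α) (i : α) :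
    SimpleGraph (Fin n) where
  Adj x y := x ≠ y ∧ c s(x, y) = i
  symm := by
    constructor
    rintro x y ⟨hxy, hc⟩
    refine ⟨hxy.symm, ?_⟩
    rwa [Sym2.eq_swap]
  loopless := by
    constructor
    rintro x ⟨hxx, -⟩
    exact hxx rfl

/-- `c` is a `(p,q)`-coloring of the complete graph on `Fin n`: every set of `p` vertices
spans edges receiving at least `q` distinct colors. -/
def IsPQColoring {n : ℕ} {α : Type*} (p q : ℕ) (c : Sym2 (Fin n) → α) : Prop :=
  ∀ S : Finset (Fin n), S.card = p →
    q ≤ {j : α | ∃ x ∈ S, ∃ y ∈ S, x ≠ y ∧ c s(x, y) = j}.ncard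

/-- `f(n,p,q)`: the minimum number of colors in a `(p,q)`-coloring of `K_n`. -/
noncomputable def fpq (n p q : ℕ) : ℕ :=
  sInf {m : ℕ | ∃ c : Sym2 (Fin n) → Fin m, IsPQColoring p q c}

/-- The coloring `c` has a monochromatic triangle. -/
def HasMonoTriangle {n : ℕ} {α : Type*} (c : Sym2 (Fin n) → α) : Prop :=
  ∃ x y z : Fin n, x ≠ y ∧ y ≠ z ∧ x ≠ z ∧
    c s(x, y) = c s(y, z) ∧ c s(y, z) = c s(x, z)

/-- The connected component `K` of `G` (as an induced subgraph) is isomorphic to `H`. -/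
def ComponentIso {V : Type*} (G : SimpleGraph V) (K : G.ConnectedComponent)
    {W : Type*} (H : SimpleGraph W) : Prop :=
  Nonempty (G.induce K.supp ≃g H)

/-- The connected component `K` of `G` contains at least one edge. -/
def CompHasEdge {V : Type*} (G : SimpleGraph V) (K : G.ConnectedComponent) : Prop :=
  ∃ u v : V, u ∈ K.supp ∧ G.Adj u v

/-- The set of monochromatic components (pairs of a color and a connected component of its
color class) isomorphic to `H`. -/
def compsIso {n : ℕ} {α : Type*} (c : Sym2 (Fin n) → α) {W : Type*} (H : SimpleGraph W) :
    Set (Σ i : α, (colorClass c i).ConnectedComponent) :=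
  {X | ComponentIso (colorClass c X.1) X.2 H}

/-- The star `K_{1,3}`. -/
def starK13 : SimpleGraph (Fin 1 ⊕ Fin 3) := completeBipartiteGraph (Fin 1) (Fin 3)

/-- `A`: maximal monochromatic components isomorphic to `K_2`. -/
def setA {n : ℕ} {α : Type*} (c : Sym2 (Fin n) → α) :
    Set (Σ i : α, (colorClass c i).ConnectedComponent) := compsIso c (pathGraph 2)

/-- `B`: maximal monochromatic components isomorphic to `P_3` (path with 2 edges). -/
def setB {n : ℕ} {α : Type*} (c : Sym2 (Fin n) → α) :
    Set (Σ i : α, (colorClass c i).ConnectedComponent) := compsIso c (pathGraph 3)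

/-- `C`: maximal monochromatic components isomorphic to `P_4` (path with 3 edges). -/
def setC {n : ℕ} {α : Type*} (c : Sym2 (Fin n) → α) :
    Set (Σ i : α, (colorClass c i).ConnectedComponent) := compsIso c (pathGraph 4)

/-- `D`: maximal monochromatic components isomorphic to `K_{1,3}`. -/
def setD {n : ℕ} {α : Type*} (c : Sym2 (Fin n) → α) :
    Set (Σ i : α, (colorClass c i).ConnectedComponent) := compsIso c starK13

/-- `B_1`: components in `B` sharing at most one vertex with every other component of `B`. -/
def setB1 {n : ℕ} {α : Type*} (c : Sym2 (Fin n) → α) :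
    Set (Σ i : α, (colorClass c i).ConnectedComponent) :=
  {X ∈ setB c | ∀ Y ∈ setB c, Y ≠ X → (X.2.supp ∩ Y.2.supp).ncard ≤ 1}

/-- `B_2 = B \ B_1`. -/
def setB2 {n : ℕ} {α : Type*} (c : Sym2 (Fin n) → α) :
    Set (Σ i : α, (colorClass c i).ConnectedComponent) := setB c \ setB1 c

/-- A monochromatic 2-edge path (for a total coloring). -/
def MonoPath2 {n : ℕ} {α : Type*} (c : Sym2 (Fin n) → α) (x y z : Fin n) : Prop :=
  x ≠ y ∧ y ≠ z ∧ x ≠ z ∧ c s(x, y) = c s(y, z)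

/-- The three values `a`, `b`, `c` take exactly two distinct values. -/
def ExactlyTwo {α : Type*} (a b c : α) : Prop :=
  (a = b ∧ a ≠ c) ∨ (b = c ∧ a ≠ b) ∨ (a = c ∧ a ≠ b)

/-- A 2-edge path `x-y-z` with both edges of color `i`, with respect to the
edge-color relation `col`. -/
def PathCol {n : ℕ} {α : Type*} (col : Sym2 (Fin n) → α → Prop) (i : α)
    (x y z : Fin n) : Prop :=
  x ≠ y ∧ y ≠ z ∧ x ≠ z ∧ col s(x, y) i ∧ col s(y, z) i

/-- A 2-edge matching `{xy, uv}` with both edges of color `i`, with respect to the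
edge-color relation `col`. -/
def MatchCol {n : ℕ} {α : Type*} (col : Sym2 (Fin n) → α → Prop) (i : α)
    (x y u v : Fin n) : Prop :=
  x ≠ y ∧ u ≠ v ∧ x ≠ u ∧ x ≠ v ∧ y ≠ u ∧ y ≠ v ∧ col s(x, y) i ∧ col s(u, v) i

/-- The colored edge set `E` contains a triangle whose three edges receive exactly
two distinct colors. -/
def TwoColTriIn {n : ℕ} {α : Type*} (E : Set (Sym2 (Fin n) × α)) : Prop :=
  ∃ (x y z : Fin n) (c₁ c₂ c₃ : α), x ≠ y ∧ y ≠ z ∧ x ≠ z ∧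
    (s(x, y), c₁) ∈ E ∧ (s(y, z), c₂) ∈ E ∧ (s(x, z), c₃) ∈ E ∧
    ExactlyTwo c₁ c₂ c₃

/-- Bad subgraph of type (a): an alternating 4-cycle formed by two monochromatic
2-edge matchings of distinct colors, with all vertices in `S`. -/
def TypeA {n : ℕ} {α : Type*} (col : Sym2 (Fin n) → α → Prop) (S : Finset (Fin n)) : Prop :=
  ∃ (w x y z : Fin n) (i ℓ : α), w ∈ S ∧ x ∈ S ∧ y ∈ S ∧ z ∈ S ∧ i ≠ ℓ ∧
    MatchCol col i w x y z ∧ MatchCol col ℓ x y z w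

/-- Bad subgraph of type (b): an alternating 5-cycle colored with two colors `i ≠ ℓ`,
where `i` appears on a 2-edge path plus a vertex-disjoint edge and `ℓ` on the remaining
two nonadjacent edges, with all vertices in `S`. -/
def TypeB {n : ℕ} {α : Type*} (col : Sym2 (Fin n) → α → Prop) (S : Finset (Fin n)) : Prop :=
  ∃ (v₀ v₁ v₂ v₃ v₄ : Fin n) (i ℓ : α),
    v₀ ∈ S ∧ v₁ ∈ S ∧ v₂ ∈ S ∧ v₃ ∈ S ∧ v₄ ∈ S ∧ i ≠ ℓ ∧
    List.Pairwise (· ≠ ·) [v₀, v₁, v₂, v₃, v₄] ∧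
    col s(v₀, v₁) i ∧ col s(v₁, v₂) i ∧ col s(v₃, v₄) i ∧
    col s(v₂, v₃) ℓ ∧ col s(v₄, v₀) ℓ

/-- Bad subgraph of type (c): a 6-edge subgraph on 5 vertices with three distinct colors,
where color `i` forms a 2-edge path and colors `ℓ`, `m` each form 2-edge matchings,
containing a triangle whose edges use exactly two colors. -/
def TypeC {n : ℕ} {α : Type*} (col : Sym2 (Fin n) → α → Prop) (S : Finset (Fin n)) : Prop :=
  ∃ (a b d x y u v p q r w : Fin n) (i ℓ m : α),
    a ∈ S ∧ b ∈ S ∧ d ∈ S ∧ x ∈ S ∧ y ∈ S ∧ u ∈ S ∧ v ∈ S ∧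
    p ∈ S ∧ q ∈ S ∧ r ∈ S ∧ w ∈ S ∧
    i ≠ ℓ ∧ i ≠ m ∧ ℓ ≠ m ∧
    PathCol col i a b d ∧ MatchCol col ℓ x y u v ∧ MatchCol col m p q r w ∧
    TwoColTriIn ({(s(a, b), i), (s(b, d), i), (s(x, y), ℓ), (s(u, v), ℓ),
      (s(p, q), m), (s(r, w), m)} : Set (Sym2 (Fin n) × α))

/-- Bad subgraph of type (d): a 6-edge subgraph on 5 vertices with three distinct colors,
where one color forms a 2-edge matching and each of the other two forms a 2-edge path. -/
def TypeD {n : ℕ} {α : Type*} (col : Sym2 (Fin n) → α → Prop) (S : Finset (Fin n)) : Prop :=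
  ∃ (a b d a' b' d' x y u v : Fin n) (i ℓ m : α),
    a ∈ S ∧ b ∈ S ∧ d ∈ S ∧ a' ∈ S ∧ b' ∈ S ∧ d' ∈ S ∧
    x ∈ S ∧ y ∈ S ∧ u ∈ S ∧ v ∈ S ∧
    i ≠ ℓ ∧ i ≠ m ∧ ℓ ≠ m ∧
    PathCol col i a b d ∧ PathCol col ℓ a' b' d' ∧ MatchCol col m x y u v

/-- Bad subgraph of type (e): a 6-edge subgraph on 5 vertices with three distinct colors,
where two colors form 2-edge matchings and the third forms a 2-edge path, containing
no triangle colored with exactly two colors. -/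
def TypeE {n : ℕ} {α : Type*} (col : Sym2 (Fin n) → α → Prop) (S : Finset (Fin n)) : Prop :=
  ∃ (a b d x y u v p q r w : Fin n) (i ℓ m : α),
    a ∈ S ∧ b ∈ S ∧ d ∈ S ∧ x ∈ S ∧ y ∈ S ∧ u ∈ S ∧ v ∈ S ∧
    p ∈ S ∧ q ∈ S ∧ r ∈ S ∧ w ∈ S ∧
    i ≠ ℓ ∧ i ≠ m ∧ ℓ ≠ m ∧
    PathCol col i a b d ∧ MatchCol col ℓ x y u v ∧ MatchCol col m p q r w ∧
    ¬ TwoColTriIn ({(s(a, b), i), (s(b, d), i), (s(x, y), ℓ), (s(u, v), ℓ),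
      (s(p, q), m), (s(r, w), m)} : Set (Sym2 (Fin n) × α))

/-- Bad subgraph of type (f): a 6-edge subgraph on 5 vertices formed by three
monochromatic 2-edge matchings of three distinct colors. -/
def TypeF {n : ℕ} {α : Type*} (col : Sym2 (Fin n) → α → Prop) (S : Finset (Fin n)) : Prop :=
  ∃ (x₁ y₁ u₁ v₁ x₂ y₂ u₂ v₂ x₃ y₃ u₃ v₃ : Fin n) (i ℓ m : α),
    x₁ ∈ S ∧ y₁ ∈ S ∧ u₁ ∈ S ∧ v₁ ∈ S ∧ x₂ ∈ S ∧ y₂ ∈ S ∧ u₂ ∈ S ∧ v₂ ∈ S ∧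
    x₃ ∈ S ∧ y₃ ∈ S ∧ u₃ ∈ S ∧ v₃ ∈ S ∧
    i ≠ ℓ ∧ i ≠ m ∧ ℓ ≠ m ∧
    MatchCol col i x₁ y₁ u₁ v₁ ∧ MatchCol col ℓ x₂ y₂ u₂ v₂ ∧ MatchCol col m x₃ y₃ u₃ v₃

/-- Bad subgraph of type `t`, where `t = 0,1,2,3,4,5` codes types (a)-(f). -/
def BadOfType {n : ℕ} {α : Type*} (t : ℕ) (col : Sym2 (Fin n) → α → Prop)
    (S : Finset (Fin n)) : Prop :=
  if t = 0 then TypeA col S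
  else if t = 1 then TypeB col S
  else if t = 2 then TypeC col S
  else if t = 3 then TypeD col S
  else if t = 4 then TypeE col S
  else TypeF col S

/-! Write `S` for the four vertices of `X`. For any fifth vertex `w`, the ten pairs inside
`S ∪ {w}` need at least eight colors, yet the six pairs inside `S` use only the color of `X`
together with the colors of the three pairs of `L(X)`, and the four pairs through `w` contribute
at most four more. Hence the pairs of `L(X)` have distinct colors, and no pair leaving `S` repeats a
color used inside `S`; together these force every pair of `L(X)` to be its own color component. -/

theorem supp_connectedComponentMk_subset_of_closed {V : Type*} {G : SimpleGraph V} {s : Set V}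
    {u : V} (hu : u ∈ s) (hclosed : ∀ x ∈ s, ∀ z, G.Adj x z → z ∈ s) :
    (G.connectedComponentMk u).supp ⊆ s := by
  intro z hz
  have hreach : Relation.ReflTransGen G.Adj u z :=
    (reachable_iff_reflTransGen u z).1 (ConnectedComponent.exact hz).symm
  clear hz
  induction hreach with
  | refl => exact hu
  | tail _ hadj ih => exact hclosed _ ih _ hadj

section Colorings

variable {n : ℕ} {α : Type*} (c : Sym2 (Fin n) → α)

def colorsOn (S : Finset (Fin n)) : Set α :=
  {j | ∃ x ∈ S, ∃ y ∈ S, x ≠ y ∧ c s(x, y) = j}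

/-- When `s` spans a component `X` of the color class of `i`, these are the pairs `L(X)`. -/
def offColorPairs (i : α) (s : Set (Fin n)) : Set (Sym2 (Fin n)) :=
  {e | ∃ x ∈ s, ∃ y ∈ s, x ≠ y ∧ c s(x, y) ≠ i ∧ s(x, y) = e}

theorem colorsOn_finite (S : Finset (Fin n)) : (colorsOn c S).Finite :=
  (Set.finite_range fun p : Fin n × Fin n => c s(p.1, p.2)).subset
    (by rintro _ ⟨x, -, y, -, -, rfl⟩; exact ⟨(x, y), rfl⟩)

theorem ncard_colorsOn_insert_le {S T : Finset (Fin n)} (w : Fin n)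
    (hT : ∀ x ∈ S, x ∉ T → c s(x, w) ∈ colorsOn c S) :
    (colorsOn c (insert w S)).ncard ≤ (colorsOn c S).ncard + T.card := by
  set f : Fin n → α := fun x => c s(x, w)
  have hthrough : ∀ y ∈ S, c s(y, w) ∈ colorsOn c S ∪ f '' T := by
    intro y hy
    by_cases hyT : y ∈ T
    · exact Or.inr ⟨y, hyT, rfl⟩
    · exact Or.inl (hT y hy hyT)
  have hsub : colorsOn c (insert w S) ⊆ colorsOn c S ∪ f '' T := by
    rintro _ ⟨x, hx, y, hy, hxy, rfl⟩
    rw [Finset.mem_insert] at hx hy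
    rcases hx with rfl | hx <;> rcases hy with rfl | hy
    · exact absurd rfl hxy
    · rw [Sym2.eq_swap]; exact hthrough y hy
    · exact hthrough x hx
    · exact Or.inl ⟨x, hx, y, hy, hxy, rfl⟩
  calc (colorsOn c (insert w S)).ncard
      ≤ (colorsOn c S ∪ f '' T).ncard :=
        Set.ncard_le_ncard hsub ((colorsOn_finite c S).union (T.finite_toSet.image f))
    _ ≤ (colorsOn c S).ncard + (f '' T).ncard := Set.ncard_union_le _ _
    _ ≤ (colorsOn c S).ncard + T.card := by
        gcongr
        exact (Set.ncard_image_le T.finite_toSet).trans (Set.ncard_coe_finset T).le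

theorem ncard_colorsOn_le_ncard_image_offColorPairs (i : α) (S : Finset (Fin n)) :
    (colorsOn c S).ncard ≤ (c '' offColorPairs c i S).ncard + 1 := by
  have hsub : colorsOn c S ⊆ insert i (c '' offColorPairs c i S) := by
    rintro _ ⟨x, hx, y, hy, hxy, rfl⟩
    by_cases hi : c s(x, y) = i
    · exact Or.inl hi
    · exact Or.inr ⟨s(x, y), ⟨x, hx, y, hy, hxy, hi, rfl⟩, rfl⟩
  exact (Set.ncard_le_ncard hsub (Set.toFinite _ |>.image c |>.insert i)).trans
    (Set.ncard_insert_le _ _)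

variable {c} {p q : ℕ} {S : Finset (Fin n)} {w : Fin n}

theorem IsPQColoring.le_ncard_colorsOn_add (hc : IsPQColoring (p + 1) q c) (hS : S.card = p)
    (hw : w ∉ S) {T : Finset (Fin n)} (hT : ∀ x ∈ S, x ∉ T → c s(x, w) ∈ colorsOn c S) :
    q ≤ (colorsOn c S).ncard + T.card :=
  (hc _ (by rw [Finset.card_insert_of_notMem hw, hS])).trans (ncard_colorsOn_insert_le c w hT)

variable {i : α}

theorem mem_offColorPairs_of_not_adj {s : Set (Fin n)} {x y : Fin n} (hx : x ∈ s) (hy : y ∈ s)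
    (hxy : x ≠ y) (hadj : ¬ (colorClass c i).Adj x y) : s(x, y) ∈ offColorPairs c i s :=
  ⟨x, hx, y, hy, hxy, fun hi => hadj ⟨hxy, hi⟩, rfl⟩

theorem IsPQColoring.injOn_offColorPairs (hc : IsPQColoring (p + 1) q c) (hS : S.card = p)
    (hq : (offColorPairs c i S).ncard + p + 1 ≤ q) (hw : w ∉ S) :
    Set.InjOn c (offColorPairs c i S) := by
  have hall := hc.le_ncard_colorsOn_add hS hw (T := S) (fun x hx hxS => absurd hx hxS)
  have hpairs := ncard_colorsOn_le_ncard_image_offColorPairs c i S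
  refine Set.injOn_of_ncard_image_eq (le_antisymm (Set.ncard_image_le (Set.toFinite _)) ?_)
  omega

theorem IsPQColoring.color_notMem_colorsOn (hc : IsPQColoring (p + 1) q c) (hS : S.card = p)
    (hq : (offColorPairs c i S).ncard + p + 1 ≤ q) (hw : w ∉ S) {x : Fin n} (hx : x ∈ S) :
    c s(x, w) ∉ colorsOn c S := by
  intro hxw
  have hall := hc.le_ncard_colorsOn_add hS hw (T := S.erase x) fun y hyS hy => by
    obtain rfl : y = x := by_contra fun hyx => hy (Finset.mem_erase.2 ⟨hyx, hyS⟩)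
    exact hxw
  have hpairs := ncard_colorsOn_le_ncard_image_offColorPairs c i S
  have himage := Set.ncard_image_le (f := c) (Set.toFinite (offColorPairs c i S))
  rw [Finset.card_erase_of_mem hx, hS] at hall
  have hp : 0 < p := hS ▸ Finset.card_pos.2 ⟨x, hx⟩
  omega

theorem supp_connectedComponentMk_colorClass_eq_pair (hinj : Set.InjOn c (offColorPairs c i S))
    (hfresh : ∀ w ∉ S, ∀ x ∈ S, c s(x, w) ∉ colorsOn c S) {u v : Fin n} (hu : u ∈ S)
    (hv : v ∈ S) (huv : u ≠ v) (hi : c s(u, v) ≠ i) :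
    ((colorClass c (c s(u, v))).connectedComponentMk u).supp = {u, v} := by
  have hadj : (colorClass c (c s(u, v))).Adj u v := ⟨huv, rfl⟩
  refine subset_antisymm (supp_connectedComponentMk_subset_of_closed (Or.inl rfl) ?_) ?_
  · rintro x hx z ⟨hxz, hcol⟩
    have hxS : x ∈ S := by rcases hx with rfl | rfl <;> assumption
    by_cases hz : z ∈ S
    · have hpair : s(x, z) = s(u, v) :=
        hinj ⟨x, hxS, z, hz, hxz, hcol ▸ hi, rfl⟩ ⟨u, hu, v, hv, huv, hi, rfl⟩ hcol
      have hzuv : z ∈ s(u, v) := hpair ▸ Sym2.mem_mk_right x z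
      simpa using hzuv
    · exact absurd (hcol ▸ ⟨u, hu, v, hv, huv, rfl⟩) (hfresh z hz x hxS)
  · rintro z (rfl | rfl)
    · rfl
    · exact (ConnectedComponent.connectedComponentMk_eq_of_adj hadj).symm

theorem offColorPairs_eq_image_of_iso {W : Type*} {s : Set (Fin n)} {H : SimpleGraph W}
    (φ : (colorClass c i).induce s ≃g H) :
    offColorPairs c i s = Sym2.map (Subtype.val ∘ φ.symm) '' Hᶜ.edgeSet := by
  ext e
  constructor
  · rintro ⟨x, hx, y, hy, hxy, hi, rfl⟩
    refine ⟨s(φ ⟨x, hx⟩, φ ⟨y, hy⟩), ?_, by simp⟩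
    rw [mem_edgeSet, compl_adj, φ.map_adj_iff, Ne, φ.apply_eq_iff_eq]
    exact ⟨fun h => hxy (congrArg Subtype.val h), fun h => hi h.2⟩
  · rintro ⟨e, he, rfl⟩
    induction e using Sym2.ind with | _ a b => ?_
    rw [mem_edgeSet, compl_adj] at he
    have hne : (φ.symm a : Fin n) ≠ φ.symm b := fun h => he.1 (φ.symm.injective (Subtype.ext h))
    exact ⟨_, (φ.symm a).2, _, (φ.symm b).2, hne,
      fun hi => he.2 (φ.symm.map_adj_iff.1 ⟨hne, hi⟩), rfl⟩

theorem ncard_offColorPairs_of_iso {W : Type*} {s : Set (Fin n)} {H : SimpleGraph W}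
    (φ : (colorClass c i).induce s ≃g H) :
    (offColorPairs c i s).ncard = Hᶜ.edgeSet.ncard := by
  rw [offColorPairs_eq_image_of_iso φ, Set.ncard_image_of_injective _
    (Sym2.map.injective (Subtype.val_injective.comp φ.symm.injective))]

end Colorings

theorem ncard_edgeSet_compl_pathGraph_four : (pathGraph 4)ᶜ.edgeSet.ncard = 3 := by
  rw [Set.ncard_eq_three]
  refine ⟨s(0, 2), s(0, 3), s(1, 3), by decide, by decide, by decide, ?_⟩
  ext e
  induction e using Sym2.ind with | _ x y => ?_
  simp only [mem_edgeSet, compl_adj, pathGraph_adj, Set.mem_insert_iff, Set.mem_singleton_iff]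
  revert x y
  decide

theorem ncard_edgeSet_compl_starK13 : starK13ᶜ.edgeSet.ncard = 3 := by
  rw [Set.ncard_eq_three]
  refine ⟨s(.inr 0, .inr 1), s(.inr 0, .inr 2), s(.inr 1, .inr 2),
    by decide, by decide, by decide, ?_⟩
  ext e
  induction e using Sym2.ind with | _ x y => ?_
  simp only [starK13, mem_edgeSet, compl_adj, completeBipartiteGraph_adj, Set.mem_insert_iff,
    Set.mem_singleton_iff]
  revert x y
  decide

theorem nonedges_of_P4_or_K13_general {n : ℕ} {α : Type*} (hn : 5 ≤ n)
    (c : Sym2 (Fin n) → α) (hc : IsPQColoring 5 8 c)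
    (i : α) (K : (colorClass c i).ConnectedComponent)
    (hK : ComponentIso (colorClass c i) K (pathGraph 4) ∨
      ComponentIso (colorClass c i) K starK13) :
    (∀ u v : Fin n, u ∈ K.supp → v ∈ K.supp → u ≠ v → ¬ (colorClass c i).Adj u v →
      ((colorClass c (c s(u, v))).connectedComponentMk u).supp = {u, v}) ∧
    (∀ u v u' v' : Fin n, u ∈ K.supp → v ∈ K.supp → u' ∈ K.supp → v' ∈ K.supp →
      u ≠ v → u' ≠ v' → ¬ (colorClass c i).Adj u v → ¬ (colorClass c i).Adj u' v' →
      s(u, v) ≠ s(u', v') → c s(u, v) ≠ c s(u', v')) := by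
  obtain ⟨hsupp, hpairs⟩ : K.supp.ncard = 4 ∧ (offColorPairs c i K.supp).ncard = 3 := by
    rcases hK with hK | hK <;> obtain ⟨φ⟩ := hK
    · exact ⟨by simpa using Nat.card_congr φ.toEquiv,
        (ncard_offColorPairs_of_iso φ).trans ncard_edgeSet_compl_pathGraph_four⟩
    · exact ⟨by simpa using Nat.card_congr φ.toEquiv,
        (ncard_offColorPairs_of_iso φ).trans ncard_edgeSet_compl_starK13⟩
  obtain ⟨S, hSK⟩ : ∃ S : Finset (Fin n), ↑S = K.supp := ⟨_, K.supp.toFinite.coe_toFinset⟩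
  rw [← hSK, Set.ncard_coe_finset] at hsupp
  rw [← hSK] at hpairs ⊢
  have hq : (offColorPairs c i S).ncard + 4 + 1 ≤ 8 := by omega
  obtain ⟨w, -, hw⟩ := Finset.exists_mem_notMem_of_card_lt_card (s := S) (t := .univ)
    (by simp only [hsupp, Finset.card_univ, Fintype.card_fin]; omega)
  have hinj := hc.injOn_offColorPairs hsupp hq hw
  refine ⟨fun u v hu hv huv hadj => ?_, fun u v u' v' hu hv hu' hv' huv hu'v' hadj hadj' hne =>
    hinj.ne (mem_offColorPairs_of_not_adj hu hv huv hadj)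
      (mem_offColorPairs_of_not_adj hu' hv' hu'v' hadj') hne⟩
  exact supp_connectedComponentMk_colorClass_eq_pair hinj
    (fun w hw x hx => hc.color_notMem_colorsOn hsupp hq hw hx) hu hv huv fun hi => hadj ⟨huv, hi⟩

/-- In a `(5,8)`-coloring of `K_n` (`n ≥ 5`) with no monochromatic
triangle, if `X` is a maximal monochromatic component isomorphic to `P_4` or `K_{1,3}`,
then each vertex pair of `X` not forming an edge of `X` forms by itself a maximal
monochromatic component isomorphic to `K_2`, and these edges receive pairwise distinct
colors. -/
theorem nonedges_of_P4_or_K13 {n : ℕ} {α : Type*} (hn : 5 ≤ n)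
    (c : Sym2 (Fin n) → α) (hc : IsPQColoring 5 8 c) (htri : ¬ HasMonoTriangle c)
    (i : α) (K : (colorClass c i).ConnectedComponent)
    (hK : ComponentIso (colorClass c i) K (pathGraph 4) ∨
      ComponentIso (colorClass c i) K starK13) :
    (∀ u v : Fin n, u ∈ K.supp → v ∈ K.supp → u ≠ v → ¬ (colorClass c i).Adj u v →
      ((colorClass c (c s(u, v))).connectedComponentMk u).supp = {u, v}) ∧
    (∀ u v u' v' : Fin n, u ∈ K.supp → v ∈ K.supp → u' ∈ K.supp → v' ∈ K.supp →
      u ≠ v → u' ≠ v' → ¬ (colorClass c i).Adj u v → ¬ (colorClass c i).Adj u' v' →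
      s(u, v) ≠ s(u', v') → c s(u, v) ≠ c s(u', v')) :=
  nonedges_of_P4_or_K13_general hn c hc i K hK
end

section
/- Let n ≥ 5 and let c be a (5,8)-coloring of K_n with no monochromatic triangle. If X is a maximal monochromatic component isomorphic to K_{1,3} and Y ≠ X is a maximal monochromatic component isomorphic to P_3, P_4, or K_{1,3}, then X and Y share at most one vertex. -/
open SimpleGraph

/-! A set of five vertices spans ten edges, so if three of them have one color and two another,
it sees at most `10 - 5 + 2 = 7 < 8` colors. Distinct components of the same color are disjoint,
so `X` and `Y` have different colors. If `Y ≅ P_3`, then `X` and `Y` together have at most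
`4 + 3 - 2 = 5` vertices, carrying the three edges of `X` and the two of `Y`. Otherwise `Y` has four
vertices and three edges, and the two common vertices lie on a two-edge path of the star `X`
through its center; together with `Y` that path again spans at most five vertices. -/

open Finset

namespace Finset

variable {β γ : Type*} [DecidableEq γ]

theorem card_image_add_card_filter_eq_add_card_filter_eq_le (s : Finset β) (f : β → γ)
    {i j : γ} (hij : i ≠ j) :
    #(s.image f) + #{x ∈ s | f x = i} + #{x ∈ s | f x = j} ≤ #s + 2 := by
  set r := {x ∈ s | f x ≠ i ∧ f x ≠ j}
  have hcover : s.image f ⊆ r.image f ∪ {i, j} := by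
    intro y hy
    obtain ⟨x, hx, rfl⟩ := mem_image.1 hy
    by_cases hxij : f x = i ∨ f x = j
    · exact mem_union_right _ (by simpa using hxij)
    · rw [not_or] at hxij
      exact mem_union_left _ (mem_image_of_mem f (mem_filter.2 ⟨hx, hxij⟩))
  have hsplit : #{x ∈ s | f x = i} + #{x ∈ s | f x = j} + #r = #s := by
    classical
    rw [← card_union_of_disjoint (disjoint_filter.2 fun _ _ hi hj => hij (hi.symm.trans hj)),
      ← filter_or, ← card_filter_add_card_filter_not (s := s) (fun x => f x = i ∨ f x = j)]
    simp only [r, not_or]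
  calc #(s.image f) + #{x ∈ s | f x = i} + #{x ∈ s | f x = j}
      ≤ #(r.image f ∪ {i, j}) + #{x ∈ s | f x = i} + #{x ∈ s | f x = j} := by
        gcongr
    _ ≤ #r + 2 + #{x ∈ s | f x = i} + #{x ∈ s | f x = j} := by
        gcongr
        exact (card_union_le _ _).trans (add_le_add card_image_le card_le_two)
    _ = #s + 2 := by omega

theorem card_union_add_two_le {s t : Finset γ} {u v : γ} (huv : u ≠ v)
    (hus : u ∈ s) (hut : u ∈ t) (hvs : v ∈ s) (hvt : v ∈ t) : #(s ∪ t) + 2 ≤ #s + #t := by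
  have : 2 ≤ #(s ∩ t) := by
    rw [← card_pair huv]
    exact card_le_card (by simp [insert_subset_iff, *])
  have := card_union_add_card_inter s t
  omega

theorem exists_pair_subset_of_mem_insert {L : Finset γ} {u v z : γ} (hL : 2 ≤ #L)
    (hu : u ∈ insert z L) (hv : v ∈ insert z L) :
    ∃ P ⊆ L, #P = 2 ∧ u ∈ insert z P ∧ v ∈ insert z P := by
  obtain ⟨P, hIP, hPL, hP⟩ := exists_subsuperset_card_eq (s := {u, v} ∩ L) inter_subset_right
    ((card_le_card inter_subset_left).trans card_le_two) hL
  have hcover {x : γ} (hx : x ∈ ({u, v} : Finset γ)) (hxL : x ∈ insert z L) : x ∈ insert z P := by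
    rcases mem_insert.1 hxL with rfl | hxL
    · exact mem_insert_self _ _
    · exact mem_insert_of_mem (hIP (mem_inter.2 ⟨hx, hxL⟩))
  exact ⟨P, hPL, hP, hcover (by simp) hu, hcover (by simp) hv⟩

end Finset

section ComponentShapes

variable {V W : Type*} {G : SimpleGraph V} {S : Set V}

theorem SimpleGraph.exists_embedding_range_eq_of_induce_iso {H : SimpleGraph W}
    (φ : G.induce S ≃g H) : ∃ f : H ↪g G, Set.range f = S := by
  refine ⟨(Embedding.induce S).comp φ.symm.toEmbedding, Set.ext fun x => ⟨?_, fun hx => ?_⟩⟩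
  · rintro ⟨w, rfl⟩
    exact (φ.symm w).2
  · exact ⟨φ ⟨x, hx⟩, by simp⟩

variable [DecidableEq V]

theorem SimpleGraph.exists_star_of_induce_iso_starK13 (h : Nonempty (G.induce S ≃g starK13)) :
    ∃ (z : V) (L : Finset V), #L = 3 ∧ S ⊆ ↑(insert z L) ∧ ∀ x ∈ L, G.Adj z x := by
  obtain ⟨f, rfl⟩ := exists_embedding_range_eq_of_induce_iso h.some
  refine ⟨f (.inl 0), univ.image (f ∘ .inr), ?_, ?_, ?_⟩
  · rw [card_image_of_injective _ (f.injective.comp Sum.inr_injective), card_univ,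
      Fintype.card_fin]
  · rintro _ ⟨w | w, rfl⟩
    · simp [Subsingleton.elim w 0]
    · simp
  · simp only [mem_image, mem_univ, true_and, Function.comp_apply, forall_exists_index]
    rintro _ k rfl
    exact f.map_adj_iff.2 (by simp [starK13])

theorem SimpleGraph.exists_star_of_induce_iso_pathGraph_three
    (h : Nonempty (G.induce S ≃g pathGraph 3)) :
    ∃ (z : V) (L : Finset V), #L = 2 ∧ S ⊆ ↑(insert z L) ∧ ∀ x ∈ L, G.Adj z x := by
  obtain ⟨f, rfl⟩ := exists_embedding_range_eq_of_induce_iso h.some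
  refine ⟨f 1, {f 0, f 2}, card_pair (f.injective.ne (by decide)), ?_, ?_⟩
  · rintro _ ⟨w, rfl⟩
    fin_cases w <;> simp
  · simp only [mem_insert, mem_singleton, forall_eq_or_imp, forall_eq]
    exact ⟨f.map_adj_iff.2 (by rw [pathGraph_adj]; decide),
      f.map_adj_iff.2 (by rw [pathGraph_adj]; decide)⟩

theorem SimpleGraph.exists_path_of_induce_iso_pathGraph_four
    (h : Nonempty (G.induce S ≃g pathGraph 4)) :
    ∃ a b d e : V, a ≠ d ∧ a ≠ e ∧ b ≠ e ∧ S ⊆ ↑({a, b, d, e} : Finset V) ∧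
      G.Adj a b ∧ G.Adj b d ∧ G.Adj d e := by
  obtain ⟨f, rfl⟩ := exists_embedding_range_eq_of_induce_iso h.some
  refine ⟨f 0, f 1, f 2, f 3, f.injective.ne (by decide), f.injective.ne (by decide),
    f.injective.ne (by decide), ?_, ?_, ?_, ?_⟩
  · rintro _ ⟨w, rfl⟩
    fin_cases w <;> simp
  all_goals exact f.map_adj_iff.2 (by rw [pathGraph_adj]; decide)

end ComponentShapes

theorem Sigma.eq_of_fst_eq_of_mem_supp {ι V : Type*} {G : ι → SimpleGraph V}
    {X Y : Σ i, (G i).ConnectedComponent} {u : V} (h : X.1 = Y.1) (hX : u ∈ X.2.supp)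
    (hY : u ∈ Y.2.supp) : X = Y := by
  obtain ⟨i, K⟩ := X
  obtain ⟨j, K'⟩ := Y
  obtain rfl : i = j := h
  rw [ConnectedComponent.mem_supp_iff] at hX hY
  exact congrArg (Sigma.mk i) (hX.symm.trans hY)

section SpannedEdges

variable {V : Type*} [DecidableEq V]

def spannedEdges (S : Finset V) : Finset (Sym2 V) := S.offDiag.image Sym2.mk.uncurry

theorem card_spannedEdges (S : Finset V) : #(spannedEdges S) = (#S).choose 2 :=
  Sym2.card_image_offDiag S

theorem mk_mem_spannedEdges {S : Finset V} {x y : V} (hx : x ∈ S) (hy : y ∈ S) (hxy : x ≠ y) :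
    s(x, y) ∈ spannedEdges S :=
  mem_image_of_mem _ (mem_offDiag.2 ⟨hx, hy, hxy⟩)

theorem spannedEdges_mono {S T : Finset V} (h : S ⊆ T) : spannedEdges S ⊆ spannedEdges T :=
  image_subset_image (offDiag_mono h)

end SpannedEdges

section Coloring

variable {n : ℕ} {α : Type*} [DecidableEq α] {c : Sym2 (Fin n) → α} {i j : α}
  {S T : Finset (Fin n)}

def coloredEdges (c : Sym2 (Fin n) → α) (i : α) (S : Finset (Fin n)) : Finset (Sym2 (Fin n)) :=
  {e ∈ spannedEdges S | c e = i}

theorem coloredEdges_mono (h : S ⊆ T) : coloredEdges c i S ⊆ coloredEdges c i T :=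
  filter_subset_filter _ (spannedEdges_mono h)

theorem mk_mem_coloredEdges {x y : Fin n} (hx : x ∈ S) (hy : y ∈ S)
    (h : (colorClass c i).Adj x y) : s(x, y) ∈ coloredEdges c i S :=
  mem_filter.2 ⟨mk_mem_spannedEdges hx hy h.1, h.2⟩

theorem setOf_spanned_colors_eq (c : Sym2 (Fin n) → α) (S : Finset (Fin n)) :
    {j : α | ∃ x ∈ S, ∃ y ∈ S, x ≠ y ∧ c s(x, y) = j} = ↑((spannedEdges S).image c) := by
  ext j
  simp [spannedEdges, and_assoc]

theorem IsPQColoring.add_card_coloredEdges_add_card_coloredEdges_le {p q : ℕ}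
    (hc : IsPQColoring p q c) (hp : p ≤ n) (hS : #S ≤ p) (hij : i ≠ j) :
    q + #(coloredEdges c i S) + #(coloredEdges c j S) ≤ p.choose 2 + 2 := by
  obtain ⟨S', hSS', -, hS'⟩ := exists_subsuperset_card_eq (subset_univ S) hS (by simpa using hp)
  have hcolors : q ≤ #((spannedEdges S').image c) := by
    simpa only [setOf_spanned_colors_eq, Set.ncard_coe_finset] using hc S' hS'
  have hmono (k : α) : #(coloredEdges c k S) ≤ #(coloredEdges c k S') :=
    card_le_card (coloredEdges_mono hSS')
  have hsplit : #((spannedEdges S').image c) + #(coloredEdges c i S') + #(coloredEdges c j S')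
      ≤ #(spannedEdges S') + 2 :=
    card_image_add_card_filter_eq_add_card_filter_eq_le (spannedEdges S') c hij
  rw [card_spannedEdges, hS'] at hsplit
  linarith [hmono i, hmono j]

theorem IsPQColoring.card_coloredEdges_add_card_coloredEdges_le_four
    (hc : IsPQColoring 5 8 c) (hn : 5 ≤ n) (hij : i ≠ j) {P Q : Finset (Fin n)}
    (hPQ : #P + #Q ≤ 7) {u v : Fin n} (huv : u ≠ v) (huP : u ∈ P) (huQ : u ∈ Q) (hvP : v ∈ P)
    (hvQ : v ∈ Q) : #(coloredEdges c i P) + #(coloredEdges c j Q) ≤ 4 := by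
  have hunion := card_union_add_two_le huv huP huQ hvP hvQ
  have hbound := hc.add_card_coloredEdges_add_card_coloredEdges_le hn
    (by omega : #(P ∪ Q) ≤ 5) hij
  rw [show Nat.choose 5 2 = 10 from rfl] at hbound
  have := card_le_card (coloredEdges_mono (c := c) (i := i) (subset_union_left : P ⊆ P ∪ Q))
  have := card_le_card (coloredEdges_mono (c := c) (i := j) (subset_union_right : Q ⊆ P ∪ Q))
  omega

theorem card_le_card_coloredEdges_insert {z : Fin n} {L : Finset (Fin n)}
    (hL : ∀ x ∈ L, (colorClass c i).Adj z x) : #L ≤ #(coloredEdges c i (insert z L)) := by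
  rw [← card_image_of_injective _ fun _ _ => Sym2.congr_right.1]
  refine card_le_card fun e he => ?_
  obtain ⟨x, hx, rfl⟩ := mem_image.1 he
  exact mk_mem_coloredEdges (mem_insert_self _ _) (mem_insert_of_mem hx) (hL x hx)

theorem three_le_card_coloredEdges_of_path {a b d e : Fin n} (had : a ≠ d) (hae : a ≠ e)
    (hbe : b ≠ e) (hab : (colorClass c i).Adj a b) (hbd : (colorClass c i).Adj b d)
    (hde : (colorClass c i).Adj d e) : 3 ≤ #(coloredEdges c i {a, b, d, e}) := by
  have hedges : ({s(a, b), s(b, d), s(d, e)} : Finset _).card = 3 := by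
    refine card_eq_three.2 ⟨_, _, _, ?_, ?_, ?_, rfl⟩ <;> simp [had, hae, hbe, hab.ne, hde.ne]
  rw [← hedges]
  refine card_le_card ?_
  simp only [insert_subset_iff, singleton_subset_iff]
  exact ⟨mk_mem_coloredEdges (by simp) (by simp) hab, mk_mem_coloredEdges (by simp) (by simp) hbd,
    mk_mem_coloredEdges (by simp) (by simp) hde⟩

theorem exists_two_coloredEdges_of_star {z u v : Fin n} {L : Finset (Fin n)}
    (hzL : ∀ x ∈ L, (colorClass c i).Adj z x) (hL : 2 ≤ #L) (hu : u ∈ insert z L)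
    (hv : v ∈ insert z L) :
    ∃ Q : Finset (Fin n), #Q ≤ 3 ∧ u ∈ Q ∧ v ∈ Q ∧ 2 ≤ #(coloredEdges c i Q) := by
  obtain ⟨P, hPL, hP, huP, hvP⟩ := exists_pair_subset_of_mem_insert hL hu hv
  refine ⟨insert z P, (card_insert_le _ _).trans (by omega), huP, hvP, ?_⟩
  exact hP ▸ card_le_card_coloredEdges_insert fun x hx => hzL x (hPL hx)

theorem exists_three_coloredEdges_of_mem_setC_union_setD
    {Y : Σ i : α, (colorClass c i).ConnectedComponent} (hY : Y ∈ setC c ∪ setD c) :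
    ∃ T : Finset (Fin n), #T ≤ 4 ∧ Y.2.supp ⊆ ↑T ∧ 3 ≤ #(coloredEdges c Y.1 T) := by
  rcases hY with hC | hD
  · obtain ⟨a, b, d, e, had, hae, hbe, hsub, hab, hbd, hde⟩ :=
      exists_path_of_induce_iso_pathGraph_four hC
    exact ⟨_, card_le_four, hsub, three_le_card_coloredEdges_of_path had hae hbe hab hbd hde⟩
  · obtain ⟨z, L, hL, hsub, hzL⟩ := exists_star_of_induce_iso_starK13 hD
    exact ⟨_, (card_insert_le _ _).trans (by omega), hsub,
      hL ▸ card_le_card_coloredEdges_insert hzL⟩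

end Coloring

theorem K13_shares_at_most_one_vertex_general {n : ℕ} {α : Type*} (hn : 5 ≤ n)
    (c : Sym2 (Fin n) → α) (hc : IsPQColoring 5 8 c)
    (X Y : Σ i : α, (colorClass c i).ConnectedComponent)
    (hX : X ∈ setD c)
    (hY : Y ∈ setB c ∪ setC c ∪ setD c)
    (hXY : X ≠ Y) :
    (X.2.supp ∩ Y.2.supp).ncard ≤ 1 := by
  classical
  by_contra! hcommon
  obtain ⟨u, v, ⟨huX, huY⟩, ⟨hvX, hvY⟩, huv⟩ :=
    (Set.one_lt_ncard_iff (Set.toFinite _)).1 hcommon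
  have hij : X.1 ≠ Y.1 := fun h => hXY (Sigma.eq_of_fst_eq_of_mem_supp h huX huY)
  obtain ⟨z, L, hL, hXsub, hzL⟩ := exists_star_of_induce_iso_starK13 hX
  have hBCD : Y ∈ setB c ∨ Y ∈ setC c ∪ setD c := by
    simpa only [Set.mem_union, or_assoc] using hY
  rcases hBCD with hB | hCD
  · obtain ⟨z', L', hL', hYsub, hzL'⟩ := exists_star_of_induce_iso_pathGraph_three hB
    have hbound := hc.card_coloredEdges_add_card_coloredEdges_le_four hn hij
      (by grw [card_insert_le, card_insert_le]; omega) huv (hXsub huX) (hYsub huY) (hXsub hvX)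
      (hYsub hvY)
    have hX3 := card_le_card_coloredEdges_insert hzL
    have hY2 := card_le_card_coloredEdges_insert hzL'
    omega
  · obtain ⟨T, hT, hYsub, hT3⟩ := exists_three_coloredEdges_of_mem_setC_union_setD hCD
    obtain ⟨Q, hQ, huQ, hvQ, hQ2⟩ :=
      exists_two_coloredEdges_of_star hzL (by omega) (hXsub huX) (hXsub hvX)
    have hbound := hc.card_coloredEdges_add_card_coloredEdges_le_four hn hij.symm (by omega) huv
      (hYsub huY) huQ (hYsub hvY) hvQ
    omega

/-- In a `(5,8)`-coloring of `K_n` (`n ≥ 5`) with no monochromatic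
triangle, a maximal monochromatic component isomorphic to `K_{1,3}` shares at most one
vertex with any other maximal monochromatic component isomorphic to `P_3`, `P_4`, or
`K_{1,3}`. -/
theorem K13_shares_at_most_one_vertex {n : ℕ} {α : Type*} (hn : 5 ≤ n)
    (c : Sym2 (Fin n) → α) (hc : IsPQColoring 5 8 c) (htri : ¬ HasMonoTriangle c)
    (X Y : Σ i : α, (colorClass c i).ConnectedComponent)
    (hX : X ∈ setD c)
    (hY : Y ∈ setB c ∪ setC c ∪ setD c)
    (hXY : X ≠ Y) :
    (X.2.supp ∩ Y.2.supp).ncard ≤ 1 :=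
  K13_shares_at_most_one_vertex_general hn c hc X Y hX hY hXY
end

section
/- Let n ≥ 5 and let c be a (5,8)-coloring of K_n with no monochromatic triangle. Then for every X ∈ B_2 there exists exactly one Y ∈ B_2 with Y ≠ X such that |V(X) ∩ V(Y)| = 2; consequently |B_2| is even and the components of B_2 can be partitioned into pairs each sharing exactly two vertices. -/
open SimpleGraph

/-!
A component in `B` is a monochromatic path `a - b - d` on three vertices, and two distinct
components in `B` share at most two vertices, since two paths of two edges and different colours
do not fit among the three edges of a triangle. If `X` shared two vertices with each of two
distinct `Y` and `Z`, the three components would have pairwise distinct colours and their six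
edges would span at most five vertices. A 5-set containing them has ten edges; those six carry
three colours and the other four at most four more, so the 5-set sees at most `7 < 8` colours.
Hence the partner of `X ∈ B₂` is unique, and `X ↦ partner` is a fixed-point-free involution of
the finite set `B₂`.
-/

open Finset

theorem Function.Involutive.even_card_of_forall_ne {β : Type*} [Fintype β] {f : β → β}
    (hf : Function.Involutive f) (hfix : ∀ x, f x ≠ x) : Even (Fintype.card β) := by
  classical
  have hmod := Equiv.Perm.card_fixedPoints_modEq (p := 2) (n := 1) (f := f) (funext hf)
  have hnone : Fintype.card (Function.fixedPoints f) = 0 :=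
    Fintype.card_eq_zero_iff.mpr ⟨fun x => hfix x.1 x.2⟩
  rw [hnone] at hmod
  exact even_iff_two_dvd.mpr (Nat.modEq_zero_iff_dvd.mp hmod)

theorem Set.Finite.even_ncard_of_existsUnique_partner {β : Type*} {s : Set β}
    (hs : s.Finite) {r : β → β → Prop} (hr : ∀ x y, r x y → r y x)
    (h : ∀ x ∈ s, ∃! y, y ∈ s ∧ y ≠ x ∧ r x y) : Even s.ncard := by
  have := hs.fintype
  choose partner hpartner huniq using h
  let f : s → s := fun x => ⟨partner x x.2, (hpartner x x.2).1⟩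
  have hf : Function.Involutive f := fun x => Subtype.ext <| by
    obtain ⟨hmem, hne, hrel⟩ := hpartner x x.2
    exact (huniq _ hmem x ⟨x.2, hne.symm, hr _ _ hrel⟩).symm
  rw [Set.ncard_eq_toFinset_card', Set.toFinset_card]
  exact hf.even_card_of_forall_ne fun x hx => (hpartner x x.2).2.1 (congrArg Subtype.val hx)

theorem subset_image_of_two_le_card_fiber {ι M : Type*} [DecidableEq M]
    {s : Finset ι} {f : ι → M} {t : Finset M} (ht : ∀ b ∈ t, 2 ≤ #{a ∈ s | f a = b}) :
    t ⊆ s.image f := by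
  intro b hb
  obtain ⟨a, ha⟩ := card_pos.mp (lt_of_lt_of_le two_pos (ht b hb))
  obtain ⟨has, rfl⟩ := mem_filter.mp ha
  exact mem_image_of_mem f has

theorem card_image_add_card_le_of_two_le_card_fiber {ι M : Type*} [DecidableEq M]
    {s : Finset ι} {f : ι → M} {t : Finset M} (ht : ∀ b ∈ t, 2 ≤ #{a ∈ s | f a = b}) :
    #(s.image f) + #t ≤ #s := by
  have hfiber_pos : ∀ b ∈ s.image f, 1 ≤ #{a ∈ s | f a = b} := by
    intro b hb
    obtain ⟨a, ha, rfl⟩ := mem_image.mp hb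
    exact card_pos.mpr ⟨a, mem_filter.mpr ⟨ha, rfl⟩⟩
  have hts := subset_image_of_two_le_card_fiber ht
  have hrest : #(s.image f \ t) ≤ ∑ b ∈ s.image f \ t, #{a ∈ s | f a = b} := by
    simpa using card_nsmul_le_sum _ _ 1 fun b hb => hfiber_pos b (mem_sdiff.mp hb).1
  have hmain : #t * 2 ≤ ∑ b ∈ t, #{a ∈ s | f a = b} := by
    simpa using card_nsmul_le_sum t _ 2 ht
  rw [card_eq_sum_card_image f s, ← sum_sdiff hts]
  rw [card_sdiff_of_subset hts] at hrest
  have := card_le_card hts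
  omega

namespace SimpleGraph

theorem exists_eq_of_induce_iso_pathGraph_three {V : Type*} {G : SimpleGraph V} {s : Set V}
    (e : G.induce s ≃g pathGraph 3) :
    ∃ a b d, a ≠ d ∧ s = {a, b, d} ∧ G.Adj a b ∧ G.Adj b d := by
  let f : Fin 3 → V := fun i => e.symm i
  have hadj : ∀ i j : Fin 3, (pathGraph 3).Adj i j → G.Adj (f i) (f j) := fun i j h =>
    e.symm.map_rel_iff.mpr h
  refine ⟨f 0, f 1, f 2, fun h => absurd (e.symm.injective (Subtype.val_injective h))
    (by decide), ?_, hadj 0 1 (by rw [pathGraph_adj]; decide),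
    hadj 1 2 (by rw [pathGraph_adj]; decide)⟩
  ext v
  refine ⟨fun hv => ?_, ?_⟩
  · have hv' : f (e ⟨v, hv⟩) = v := congrArg Subtype.val (e.symm_apply_apply ⟨v, hv⟩)
    generalize e ⟨v, hv⟩ = i at hv'
    fin_cases i <;> simp [← hv']
  · rintro (rfl | rfl | rfl) <;> exact Subtype.coe_prop _

theorem fst_ne_of_supp_inter_nonempty {ι V : Type*} {G : ι → SimpleGraph V}
    {X Y : Σ i, (G i).ConnectedComponent} (hXY : X ≠ Y)
    (h : (X.2.supp ∩ Y.2.supp).Nonempty) : X.1 ≠ Y.1 := by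
  obtain ⟨i, K⟩ := X
  obtain ⟨j, L⟩ := Y
  rintro (rfl : i = j)
  obtain ⟨v, hvK, hvL⟩ := h
  exact hXY (by rw [← (ConnectedComponent.mem_supp_iff K v).mp hvK,
    ← (ConnectedComponent.mem_supp_iff L v).mp hvL])

end SimpleGraph

section Coloring

variable {n : ℕ} {α : Type*} {c : Sym2 (Fin n) → α}
  {X Y Z : Σ i : α, (colorClass c i).ConnectedComponent}

theorem IsPQColoring.add_card_le_choose [DecidableEq α] {p q : ℕ} (hc : IsPQColoring p q c)
    (hpn : p ≤ n) {T : Finset (Fin n)} (hT : #T ≤ p) {I : Finset α}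
    (hI : ∀ i ∈ I, 2 ≤ #{e ∈ T.offDiag.image Sym2.mk.uncurry | c e = i}) :
    q + #I ≤ p.choose 2 := by
  obtain ⟨S, hTS, -, hS⟩ := exists_subsuperset_card_eq (subset_univ T) hT (by simpa using hpn)
  set F := S.offDiag.image Sym2.mk.uncurry
  have hcolors :
      {j : α | ∃ x ∈ S, ∃ y ∈ S, x ≠ y ∧ c s(x, y) = j} = ↑(F.image c) := by
    ext
    simp [F, and_assoc]
  have hq := hc S hS
  rw [hcolors, Set.ncard_coe_finset] at hq
  have hcount := card_image_add_card_le_of_two_le_card_fiber (s := F) (f := c) fun i hi =>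
    (hI i hi).trans (card_le_card (filter_subset_filter _
      (image_subset_image (offDiag_mono hTS))))
  rw [Sym2.card_image_offDiag, hS] at hcount
  omega

theorem exists_supp_eq_of_mem_setB (hX : X ∈ setB c) :
    ∃ a b d, a ≠ b ∧ b ≠ d ∧ a ≠ d ∧ X.2.supp = {a, b, d} ∧
      c s(a, b) = X.1 ∧ c s(b, d) = X.1 := by
  obtain ⟨a, b, d, had, hs, ⟨hab, hcab⟩, ⟨hbd, hcbd⟩⟩ :=
    SimpleGraph.exists_eq_of_induce_iso_pathGraph_three hX.some
  exact ⟨a, b, d, hab, hbd, had, hs, hcab, hcbd⟩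

theorem ncard_supp_of_mem_setB (hX : X ∈ setB c) : X.2.supp.ncard = 3 := by
  obtain ⟨a, b, d, hab, hbd, had, hs, -⟩ := exists_supp_eq_of_mem_setB hX
  rw [hs, Set.ncard_eq_three]
  exact ⟨a, b, d, hab, had, hbd, rfl⟩

theorem two_le_card_colorEdges_of_mem_setB [DecidableEq α] (hX : X ∈ setB c)
    {T : Finset (Fin n)} (hT : X.2.supp ⊆ T) :
    2 ≤ #{e ∈ T.offDiag.image Sym2.mk.uncurry | c e = X.1} := by
  obtain ⟨a, b, d, hab, hbd, had, hs, hcab, hcbd⟩ := exists_supp_eq_of_mem_setB hX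
  rw [hs] at hT
  have hmem : ∀ x y, x ∈ ({a, b, d} : Set (Fin n)) → y ∈ ({a, b, d} : Set (Fin n)) →
      x ≠ y → c s(x, y) = X.1 →
      s(x, y) ∈ ({e ∈ T.offDiag.image Sym2.mk.uncurry | c e = X.1} : Finset _) :=
    fun x y hx hy hxy hc => mem_filter.mpr
      ⟨mem_image.mpr ⟨(x, y), mem_offDiag.mpr ⟨hT hx, hT hy, hxy⟩, rfl⟩, hc⟩
  have hne : s(a, b) ≠ s(b, d) := by simp [hab, had]
  calc 2 = #{s(a, b), s(b, d)} := (card_pair hne).symm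
    _ ≤ _ := card_le_card <| insert_subset_iff.mpr ⟨hmem a b (by simp) (by simp) hab hcab,
        singleton_subset_iff.mpr (hmem b d (by simp) (by simp) hbd hcbd)⟩

theorem eq_of_supp_eq_of_mem_setB (hX : X ∈ setB c) (hY : Y ∈ setB c)
    (h : X.2.supp = Y.2.supp) : X = Y := by
  classical
  by_contra hXY
  have hcol : X.1 ≠ Y.1 := SimpleGraph.fst_ne_of_supp_inter_nonempty hXY <| by
    rw [← h, Set.inter_self]
    exact Set.nonempty_of_ncard_ne_zero (by rw [ncard_supp_of_mem_setB hX]; decide)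
  set T := X.2.supp.toFinset
  have hT : #T = 3 := by rw [← Set.ncard_eq_toFinset_card', ncard_supp_of_mem_setB hX]
  have hfiber : ∀ i ∈ ({X.1, Y.1} : Finset α),
      2 ≤ #{e ∈ T.offDiag.image Sym2.mk.uncurry | c e = i} := by
    simp only [mem_insert, mem_singleton]
    rintro i (rfl | rfl)
    · exact two_le_card_colorEdges_of_mem_setB hX (by simp [T])
    · exact two_le_card_colorEdges_of_mem_setB hY (by simp [T, h])
  have hcount := card_image_add_card_le_of_two_le_card_fiber hfiber
  have := card_le_card (subset_image_of_two_le_card_fiber hfiber)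
  rw [Sym2.card_image_offDiag, hT, card_pair hcol, show Nat.choose 3 2 = 3 from rfl] at hcount
  rw [card_pair hcol] at this
  omega

theorem setB_finite : (setB c).Finite :=
  Set.Finite.of_finite_image (Set.toFinite _) fun _ hX _ hY h => eq_of_supp_eq_of_mem_setB hX hY h

theorem ncard_supp_inter_le_two (hX : X ∈ setB c) (hY : Y ∈ setB c) (hXY : X ≠ Y) :
    (X.2.supp ∩ Y.2.supp).ncard ≤ 2 := by
  have hle : (X.2.supp ∩ Y.2.supp).ncard ≤ 3 :=
    ncard_supp_of_mem_setB hX ▸ Set.ncard_le_ncard Set.inter_subset_left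
  refine Nat.le_of_lt_succ (lt_of_le_of_ne hle fun h3 => hXY ?_)
  have hXin : X.2.supp ∩ Y.2.supp = X.2.supp := Set.eq_of_subset_of_ncard_le
    Set.inter_subset_left (by rw [ncard_supp_of_mem_setB hX, h3])
  have hYin : X.2.supp ∩ Y.2.supp = Y.2.supp := Set.eq_of_subset_of_ncard_le
    Set.inter_subset_right (by rw [ncard_supp_of_mem_setB hY, h3])
  exact eq_of_supp_eq_of_mem_setB hX hY (hXin.symm.trans hYin)

theorem mem_setB2_iff : X ∈ setB2 c ↔
    X ∈ setB c ∧ ∃ Y ∈ setB c, Y ≠ X ∧ (X.2.supp ∩ Y.2.supp).ncard = 2 := by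
  simp only [setB2, setB1, Set.mem_sdiff, Set.mem_ofPred_eq, not_and, not_forall, not_le]
  refine and_congr_right fun hX =>
    ⟨fun h => ?_, fun ⟨Y, hY, hYX, h2⟩ _ => ⟨Y, hY, hYX, by omega⟩⟩
  obtain ⟨Y, hY, hYX, h2⟩ := h hX
  exact ⟨Y, hY, hYX, le_antisymm (ncard_supp_inter_le_two hX hY hYX.symm) h2⟩

theorem eq_of_ncard_supp_inter_eq_two (hn : 5 ≤ n) (hc : IsPQColoring 5 8 c)
    (hX : X ∈ setB c) (hY : Y ∈ setB c) (hZ : Z ∈ setB c) (hYX : Y ≠ X) (hZX : Z ≠ X)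
    (hXY : (X.2.supp ∩ Y.2.supp).ncard = 2) (hXZ : (X.2.supp ∩ Z.2.supp).ncard = 2) :
    Y = Z := by
  classical
  by_contra hYZ
  have hX3 := ncard_supp_of_mem_setB hX
  have hY3 := ncard_supp_of_mem_setB hY
  have hZ3 := ncard_supp_of_mem_setB hZ
  have hcolXY : X.1 ≠ Y.1 := SimpleGraph.fst_ne_of_supp_inter_nonempty hYX.symm
    (Set.nonempty_of_ncard_ne_zero (by omega))
  have hcolXZ : X.1 ≠ Z.1 := SimpleGraph.fst_ne_of_supp_inter_nonempty hZX.symm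
    (Set.nonempty_of_ncard_ne_zero (by omega))
  -- `Y` and `Z` each meet the three vertices of `X` in two of them
  have hcolYZ : Y.1 ≠ Z.1 := by
    refine SimpleGraph.fst_ne_of_supp_inter_nonempty hYZ (Set.Nonempty.mono
      (Set.inter_subset_inter (Set.inter_subset_right (s := X.2.supp))
        (Set.inter_subset_right (s := X.2.supp))) (Set.nonempty_of_ncard_ne_zero ?_))
    have := Set.ncard_union_add_ncard_inter (X.2.supp ∩ Y.2.supp) (X.2.supp ∩ Z.2.supp)
    have := Set.ncard_le_ncard (Set.union_subset (Set.inter_subset_left (t := Y.2.supp))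
      (Set.inter_subset_left (t := Z.2.supp))) (Set.toFinite X.2.supp)
    omega
  set T := (X.2.supp ∪ Y.2.supp ∪ Z.2.supp).toFinset
  have hT : #T ≤ 5 := by
    rw [← Set.ncard_eq_toFinset_card']
    have := Set.ncard_union_add_ncard_inter X.2.supp Y.2.supp
    have := Set.ncard_union_add_ncard_inter (X.2.supp ∪ Y.2.supp) Z.2.supp
    have := Set.ncard_le_ncard (Set.inter_subset_inter_left Z.2.supp
      (Set.subset_union_left (s := X.2.supp) (t := Y.2.supp))) (Set.toFinite _)
    omega
  have hfiber : ∀ i ∈ ({X.1, Y.1, Z.1} : Finset α),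
      2 ≤ #{e ∈ T.offDiag.image Sym2.mk.uncurry | c e = i} := by
    simp only [mem_insert, mem_singleton]
    rintro i (rfl | rfl | rfl)
    · exact two_le_card_colorEdges_of_mem_setB hX fun v hv => by simp [T, hv]
    · exact two_le_card_colorEdges_of_mem_setB hY fun v hv => by simp [T, hv]
    · exact two_le_card_colorEdges_of_mem_setB hZ fun v hv => by simp [T, hv]
  have := hc.add_card_le_choose hn hT hfiber
  rw [card_eq_three.mpr ⟨_, _, _, hcolXY, hcolXZ, hcolYZ, rfl⟩] at this
  exact absurd this (by decide)

end Coloring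

theorem B2_pairing_general {n : ℕ} {α : Type*} (hn : 5 ≤ n)
    (c : Sym2 (Fin n) → α) (hc : IsPQColoring 5 8 c) :
    (∀ X ∈ setB2 c, ∃! Y : (Σ i : α, (colorClass c i).ConnectedComponent),
      Y ∈ setB2 c ∧ Y ≠ X ∧ (X.2.supp ∩ Y.2.supp).ncard = 2) ∧
    Even ((setB2 c).ncard) := by
  have hpartner : ∀ X ∈ setB2 c, ∃! Y : (Σ i : α, (colorClass c i).ConnectedComponent),
      Y ∈ setB2 c ∧ Y ≠ X ∧ (X.2.supp ∩ Y.2.supp).ncard = 2 := by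
    intro X hX
    obtain ⟨hXB, Y, hYB, hYX, hXY⟩ := mem_setB2_iff.mp hX
    have hY : Y ∈ setB2 c :=
      mem_setB2_iff.mpr ⟨hYB, X, hXB, hYX.symm, by rwa [Set.inter_comm]⟩
    refine ⟨Y, ⟨hY, hYX, hXY⟩, fun Z ⟨hZ, hZX, hXZ⟩ => ?_⟩
    exact (eq_of_ncard_supp_inter_eq_two hn hc hXB hYB hZ.1 hYX hZX hXY hXZ).symm
  refine ⟨hpartner, ?_⟩
  exact (setB_finite.subset Set.sdiff_subset).even_ncard_of_existsUnique_partner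
    (fun X Y h => by rwa [Set.inter_comm]) hpartner

/-- In a `(5,8)`-coloring of `K_n` (`n ≥ 5`) with no monochromatic
triangle, every `X ∈ B₂` has exactly one partner `Y ∈ B₂`, `Y ≠ X`, with
`|V(X) ∩ V(Y)| = 2`; consequently `|B₂|` is even. -/
theorem B2_pairing {n : ℕ} {α : Type*} (hn : 5 ≤ n)
    (c : Sym2 (Fin n) → α) (hc : IsPQColoring 5 8 c) (htri : ¬ HasMonoTriangle c) :
    (∀ X ∈ setB2 c, ∃! Y : (Σ i : α, (colorClass c i).ConnectedComponent),
      Y ∈ setB2 c ∧ Y ≠ X ∧ (X.2.supp ∩ Y.2.supp).ncard = 2) ∧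
    Even ((setB2 c).ncard) :=
  B2_pairing_general hn c hc
end
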